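/- arXiv:1411.4559 — 4 statements merged into one kernel-verified Lean document; each statement's English description precedes it below -/
import Mathlib

section
/- Let H be a complex Hilbert space and (x_n)_{n∈ℕ} a sequence in H. Then (x_n) is a Parseval frame for H if and only if there exist a complex Hilbert space K, a linear isometry V : H → K, and an orthonormal basis (e_n)_{n∈ℕ} of K such that x_n = V*(e_n) for all n, where V* denotes the Hilbert-space adjoint of V (this expresses that, identifying H with V(H), each x_n is the orthogonal compression P e_n of e_n, P being the orthogonal projection of K onto H). -/
/-!
The analysis operator `v ↦ (⟪xₙ, v⟫)ₙ` of a Parseval frame is an isometry `H → ℓ²`, and its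
adjoint maps the `n`-th standard basis vector of `ℓ²` to `xₙ`. Conversely, if `xₙ = V* eₙ` then
`⟪v, xₙ⟫ = ⟪V v, eₙ⟫`, so Parseval's identity for `(eₙ)` at `V v` together with `‖V v‖ = ‖v‖`
is the frame identity at `v`.
-/

universe u

open scoped InnerProductSpace lp

noncomputable section

variable {𝕜 : Type*} [RCLike 𝕜] {ι : Type*}
  {H : Type*} [NormedAddCommGroup H] [InnerProductSpace 𝕜 H]
  {K : Type*} [NormedAddCommGroup K] [InnerProductSpace 𝕜 K]

theorem lp.hasSum_norm_sq {E : ι → Type*} [∀ i, NormedAddCommGroup (E i)] (f : lp E 2) :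
    HasSum (fun i => ‖f i‖ ^ 2) (‖f‖ ^ 2) := by
  simpa only [ENNReal.toReal_ofNat, Real.rpow_two] using lp.hasSum_norm (p := 2) (by norm_num) f

theorem HilbertBasis.hasSum_norm_inner_sq (b : HilbertBasis ι 𝕜 K) (v : K) :
    HasSum (fun i => ‖⟪v, b i⟫_𝕜‖ ^ 2) (‖v‖ ^ 2) := by
  simpa [b.repr_apply_apply, norm_inner_symm] using lp.hasSum_norm_sq (b.repr v)

protected def HilbertBasis.reindex [CompleteSpace K] {ι' : Type*} (b : HilbertBasis ι 𝕜 K)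
    (σ : ι ≃ ι') : HilbertBasis ι' 𝕜 K :=
  HilbertBasis.mk (b.orthonormal.comp σ.symm σ.symm.injective) <| by
    rw [σ.symm.surjective.range_comp, b.dense_span]

@[simp]
theorem HilbertBasis.reindex_apply [CompleteSpace K] {ι' : Type*} (b : HilbertBasis ι 𝕜 K)
    (σ : ι ≃ ι') (i : ι') : b.reindex σ i = b (σ.symm i) := by
  simp [HilbertBasis.reindex]

variable (𝕜) in
def IsParsevalFrame (x : ι → H) : Prop :=
  ∀ v : H, HasSum (fun i => ‖⟪v, x i⟫_𝕜‖ ^ 2) (‖v‖ ^ 2)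

theorem isParsevalFrame_adjoint_hilbertBasis [CompleteSpace H] [CompleteSpace K]
    (V : H →ₗᵢ[𝕜] K) (b : HilbertBasis ι 𝕜 K) :
    IsParsevalFrame 𝕜 fun i => ContinuousLinearMap.adjoint V.toContinuousLinearMap (b i) := by
  intro v
  simp_rw [ContinuousLinearMap.adjoint_inner_right, ← V.norm_map v]
  exact b.hasSum_norm_inner_sq (V v)

namespace IsParsevalFrame

variable {x : ι → H}

theorem comp_equiv {ι' : Type*} (hx : IsParsevalFrame 𝕜 x) (σ : ι' ≃ ι) :
    IsParsevalFrame 𝕜 (x ∘ σ) :=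
  fun v => σ.hasSum_iff.2 (hx v)

theorem memℓp_inner (hx : IsParsevalFrame 𝕜 x) (v : H) : Memℓp (fun i => ⟪x i, v⟫_𝕜) 2 :=
  memℓp_gen <| by simpa [norm_inner_symm] using (hx v).summable

def analysisOperator (hx : IsParsevalFrame 𝕜 x) : H →ₗᵢ[𝕜] ℓ²(ι, 𝕜) where
  toFun v := ⟨fun i => ⟪x i, v⟫_𝕜, hx.memℓp_inner v⟩
  map_add' u v := by ext i; exact inner_add_right _ _ _
  map_smul' c v := by ext i; simp [inner_smul_right]
  norm_map' v := by
    have h : ‖(⟨_, hx.memℓp_inner v⟩ : ℓ²(ι, 𝕜))‖ ^ 2 = ‖v‖ ^ 2 :=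
      (lp.hasSum_norm_sq _).unique (by simpa only [norm_inner_symm] using hx v)
    exact (pow_left_inj₀ (norm_nonneg _) (norm_nonneg _) two_ne_zero).1 h

theorem adjoint_analysisOperator_single [CompleteSpace H] [DecidableEq ι]
    (hx : IsParsevalFrame 𝕜 x) (i : ι) :
    ContinuousLinearMap.adjoint hx.analysisOperator.toContinuousLinearMap (lp.single 2 i 1) =
      x i := by
  refine ext_inner_right 𝕜 fun v => ?_
  rw [ContinuousLinearMap.adjoint_inner_left, lp.inner_single_left]
  simp [analysisOperator]

end IsParsevalFrame

end

/-- **Dilation characterization of Parseval frames** (Han–Larson).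
A sequence `(xₙ)` in a complex Hilbert space `H` is a Parseval frame
(i.e. `∑ₙ |⟨v, xₙ⟩|² = ‖v‖²` for every `v`) if and only if there exist a complex
Hilbert space `K`, a linear isometry `V : H → K` and an orthonormal basis `(eₙ)`
of `K` such that `xₙ = V* eₙ` for all `n`. -/
theorem parseval_frame_iff_orthonormal_basis_dilation
    {H : Type u} [NormedAddCommGroup H] [InnerProductSpace ℂ H] [CompleteSpace H]
    (x : ℕ → H) :
    (∀ v : H, HasSum (fun n : ℕ => ‖(inner ℂ v (x n) : ℂ)‖ ^ 2) (‖v‖ ^ 2)) ↔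
      ∃ (K : Type u) (_ : NormedAddCommGroup K) (_ : InnerProductSpace ℂ K)
        (_ : CompleteSpace K) (V : H →ₗᵢ[ℂ] K) (e : HilbertBasis ℕ ℂ K),
        ∀ n : ℕ, (ContinuousLinearMap.adjoint V.toContinuousLinearMap) (e n) = x n := by
  constructor
  · intro hx
    -- `ℓ²` is indexed by `ULift ℕ` so that `K` lives in the universe of `H`.
    have hx' : IsParsevalFrame ℂ (x ∘ Equiv.ulift.{u}) := IsParsevalFrame.comp_equiv hx _
    refine ⟨ℓ²(ULift.{u} ℕ, ℂ), inferInstance, inferInstance, inferInstance,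
      hx'.analysisOperator, (default : HilbertBasis _ ℂ _).reindex Equiv.ulift, fun n => ?_⟩
    classical
    rw [HilbertBasis.reindex_apply, ← HilbertBasis.repr_symm_single]
    exact hx'.adjoint_analysisOperator_single _
  · rintro ⟨K, _, _, _, V, e, hx⟩
    obtain rfl : (fun n => ContinuousLinearMap.adjoint V.toContinuousLinearMap (e n)) = x :=
      funext hx
    exact isParsevalFrame_adjoint_hilbertBasis V e
end

section
/- Let Ω be a σ-compact, locally compact Hausdorff space, μ a positive Radon measure on Ω with support equal to Ω, and H a separable complex Hilbert space. Let F : Ω → H be an (Ω,μ)-frame for H and let G : Ω → H be a Bessel map that is a dual of F. Suppose there exist a Hilbert space H₀ and an (Ω,μ)-frame F₀ for H₀ such that, with M := V_{F₀}(H₀) ⊆ L²(Ω,μ), one has V_F(H) ⊆ M and V_G(H) ⊆ M. Then there exist a Hilbert space K, a linear isometry W : H → K, and an (Ω,μ)-frame F̃ : Ω → K for K such that W*(F̃(ω)) = F(ω) and W*(S_{F̃}⁻¹ F̃(ω)) = G(ω) for all ω ∈ Ω, and V_{F̃}(K) = M, where S_{F̃} is the frame operator of F̃ and W* is the adjoint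 of W. -/
open MeasureTheory
open scoped ENNReal

universe u v

noncomputable section

/-- A weakly continuous map `F : Ω → H` is an `(Ω,μ)`-frame for the Hilbert space `H`:
there are constants `0 < C₁ ≤ C₂` with
`C₁‖x‖² ≤ ∫_Ω |⟨x, F ω⟩|² dμ ≤ C₂‖x‖²` for all `x ∈ H`. -/
def IsContinuousFrame {Ω : Type*} [TopologicalSpace Ω] [MeasurableSpace Ω]
    (μ : Measure Ω) {H : Type*} [NormedAddCommGroup H] [InnerProductSpace ℂ H]
    (F : Ω → H) : Prop :=
  (∀ x : H, Continuous fun ω => (inner ℂ x (F ω) : ℂ)) ∧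
  ∃ C₁ C₂ : ℝ, 0 < C₁ ∧ C₁ ≤ C₂ ∧ ∀ x : H,
    Integrable (fun ω => ‖(inner ℂ x (F ω) : ℂ)‖ ^ 2) μ ∧
    C₁ * ‖x‖ ^ 2 ≤ ∫ ω, ‖(inner ℂ x (F ω) : ℂ)‖ ^ 2 ∂μ ∧
    (∫ ω, ‖(inner ℂ x (F ω) : ℂ)‖ ^ 2 ∂μ) ≤ C₂ * ‖x‖ ^ 2

/-!
Lift the analysis operators through `V_{F₀}`: `V_F = V_{F₀} B` and `V_G = V_{F₀} A`, and put
`S₀ = V_{F₀}* V_{F₀}`. Duality says `B* (S₀ A) = 1`. A positive invertible `S` with `S (S₀ A) = B`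
has a square root `T` for which `W = T S₀ A` is an isometry with `T W = B`. The dilated frame is
`F̃ = T* F₀`, with analysis operator `V_{F₀} T` of range `M`. Then `W* F̃ = (T W)* F₀ = B* F₀ = F`
and `W* S̃⁻¹ F̃ = A* F₀ = G`, where `B* F₀ = F` and `A* F₀ = G` hold everywhere, not only almost
everywhere, because all the functions involved are continuous and `μ` has full support.
-/

open ContinuousLinearMap

section L2

variable {Ω : Type*} [MeasurableSpace Ω] {μ : Measure Ω}

lemma MeasureTheory.L2.inner_eq_integral_of_ae_eq {f g : Lp ℂ 2 μ} {f' g' : Ω → ℂ}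
    (hf : f =ᵐ[μ] f') (hg : g =ᵐ[μ] g') :
    inner ℂ f g = ∫ ω, starRingEnd ℂ (f' ω) * g' ω ∂μ := by
  rw [L2.inner_def]
  refine integral_congr_ae ?_
  filter_upwards [hf, hg] with ω h₁ h₂
  simp [RCLike.inner_apply, h₁, h₂, mul_comm]

variable {H : Type*} [NormedAddCommGroup H] [InnerProductSpace ℂ H] [CompleteSpace H]

lemma adjoint_comp_eq_id_of_dual {F G : Ω → H} {VF VG : H →L[ℂ] Lp ℂ 2 μ}
    (hVF : ∀ x, (VF x : Ω → ℂ) =ᵐ[μ] fun ω => inner ℂ (F ω) x)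
    (hVG : ∀ x, (VG x : Ω → ℂ) =ᵐ[μ] fun ω => inner ℂ (G ω) x)
    (h_dual : ∀ x y : H, inner ℂ y x = ∫ ω, inner ℂ (F ω) x * inner ℂ y (G ω) ∂μ) :
    adjoint VF ∘L VG = ContinuousLinearMap.id ℂ H := by
  ext1 y
  refine ext_inner_right ℂ fun x => ?_
  rw [comp_apply, adjoint_inner_left, L2.inner_eq_integral_of_ae_eq (hVG y) (hVF x), id_apply,
    h_dual x y]
  simp only [inner_conj_symm, mul_comm]

end L2

section Operators

variable {𝕜 E F G : Type*} [RCLike 𝕜]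
  [NormedAddCommGroup E] [InnerProductSpace 𝕜 E] [CompleteSpace E]
  [NormedAddCommGroup F] [InnerProductSpace 𝕜 F] [CompleteSpace F]
  [NormedAddCommGroup G] [InnerProductSpace 𝕜 G]

lemma exists_comp_eq_of_range_subset {J : E →L[𝕜] F} (hJ : IsUnit (adjoint J ∘L J))
    {V : G →L[𝕜] F} (hV : Set.range V ⊆ Set.range J) : ∃ C : G →L[𝕜] E, J ∘L C = V := by
  obtain ⟨u, hu⟩ := hJ
  refine ⟨↑u⁻¹ ∘L adjoint J ∘L V, ContinuousLinearMap.ext fun x => ?_⟩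
  obtain ⟨z, hz⟩ := hV ⟨x, rfl⟩
  have hz' : (↑u⁻¹ * ↑u : E →L[𝕜] E) z = z := by simp
  rw [hu] at hz'
  simp only [comp_apply, ← hz]
  exact congrArg J hz'

/-- With `Q = 1 - A B*`, every `x` splits as `A (B* x) + Q x`, which makes
`S = B B* + Q* Q` coercive; and `Q A = 0` gives `S A = B`. -/
lemma exists_isPositive_isUnit_comp_eq {B A : E →L[𝕜] F}
    (h : adjoint B ∘L A = ContinuousLinearMap.id 𝕜 E) :
    ∃ S : F →L[𝕜] F, S.IsPositive ∧ IsUnit S ∧ S ∘L A = B := by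
  set Q := ContinuousLinearMap.id 𝕜 F - A ∘L adjoint B
  set S := B ∘L adjoint B + adjoint Q ∘L Q
  have hQA : Q ∘L A = 0 := by simp [Q, sub_comp, comp_assoc, h]
  have hS : ∀ x, RCLike.re (inner 𝕜 (S x) x) = ‖adjoint B x‖ ^ 2 + ‖Q x‖ ^ 2 := fun x => by
    rw [add_apply, inner_add_left, map_add, comp_apply, comp_apply, adjoint_inner_left Q,
      ← adjoint_inner_right B, inner_self_eq_norm_sq, inner_self_eq_norm_sq]
  have hsplit : ∀ x, ‖x‖ ≤ ‖A‖ * ‖adjoint B x‖ + ‖Q x‖ := fun x =>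
    calc ‖x‖ = ‖A (adjoint B x) + Q x‖ := by simp [Q]
      _ ≤ ‖A‖ * ‖adjoint B x‖ + ‖Q x‖ := (norm_add_le _ _).trans (by gcongr; exact A.le_opNorm _)
  refine ⟨S, (isPositive_self_comp_adjoint B).add (isPositive_adjoint_comp_self Q),
    isUnit_of_forall_le_norm_inner_map S (c := (2 * (‖A‖ ^ 2 + 1))⁻¹.toNNReal)
      (Real.toNNReal_pos.mpr (by positivity)) fun x => ?_,
    by simp [S, add_comp, comp_assoc, h, hQA]⟩
  refine le_trans ?_ ((hS x).symm.le.trans (RCLike.re_le_norm _))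
  rw [Real.coe_toNNReal _ (by positivity), ← div_eq_mul_inv, div_le_iff₀ (by positivity)]
  nlinarith [mul_self_le_mul_self (norm_nonneg x) (hsplit x),
    sq_nonneg (‖A‖ * ‖adjoint B x‖ - ‖Q x‖), sq_nonneg (‖A‖ * ‖Q x‖), sq_nonneg ‖adjoint B x‖]

end Operators

section Dilation

variable {E F G : Type*}
  [NormedAddCommGroup E] [InnerProductSpace ℂ E] [CompleteSpace E]
  [NormedAddCommGroup F] [InnerProductSpace ℂ F] [CompleteSpace F]
  [NormedAddCommGroup G] [InnerProductSpace ℂ G] [CompleteSpace G]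

lemma exists_isUnit_isometry_comp_eq {B A : E →L[ℂ] F}
    (h : adjoint B ∘L A = ContinuousLinearMap.id ℂ E) :
    ∃ T : F →L[ℂ] F, IsUnit T ∧ ∃ W : E →ₗᵢ[ℂ] F,
      T ∘L W.toContinuousLinearMap = B ∧ W.toContinuousLinearMap = adjoint T ∘L A := by
  obtain ⟨S, hSpos, hSunit, hSA⟩ := exists_isPositive_isUnit_comp_eq h
  have hS : 0 ≤ S := (nonneg_iff_isPositive S).mpr hSpos
  set T := CFC.sqrt S
  have hT : adjoint T = T := (CFC.sqrt_nonneg S).isSelfAdjoint.adjoint_eq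
  have hTTA : T ∘L T ∘L A = B := by
    rw [← comp_assoc]
    exact (congrArg (· ∘L A) (CFC.sqrt_mul_sqrt_self S)).trans hSA
  have hinner : ∀ x y, inner ℂ (T (A x)) (T (A y)) = inner ℂ x y := fun x y => by
    rw [← adjoint_inner_right, hT, ← comp_apply T T, ← comp_apply (T ∘L T), comp_assoc, hTTA,
      ← inner_conj_symm, ← adjoint_inner_right, ← comp_apply (adjoint B), h, id_apply,
      inner_conj_symm]
  refine ⟨T, (CFC.isUnit_sqrt_iff S).mpr hSunit,
    LinearMap.isometryOfInner (T ∘L A).toLinearMap hinner, ?_, ?_⟩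
  · ext x
    exact congrArg (· x) hTTA
  · ext x
    simp [hT]

/-- The frame operator of `J T` is `T* S₀ T` with `S₀ = J* J`; testing against the range of
`S₀ T`, which is everything, reduces the identity to `W* = A* S₀ T`. -/
lemma adjoint_comp_inverse_adjoint_comp_self_comp_adjoint {J : E →L[ℂ] G} {T : E →L[ℂ] E}
    (hJ : IsUnit (adjoint J ∘L J)) (hT : IsUnit T) (A : F →L[ℂ] E) :
    adjoint (adjoint T ∘L adjoint J ∘L J ∘L A) ∘L
        Ring.inverse (adjoint (J ∘L T) ∘L (J ∘L T)) ∘L adjoint T = adjoint A := by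
  set St := adjoint (J ∘L T) ∘L (J ∘L T)
  have hSt : IsUnit St := by
    have : St = star T * (adjoint J ∘L J) * T := by simp only [St, adjoint_comp]; rfl
    exact this ▸ (hT.star.mul hJ).mul hT
  ext1 y
  obtain ⟨z, rfl⟩ : ∃ z, adjoint J (J (T z)) = y := (isUnit_iff_bijective.mp (hJ.mul hT)).2 y
  have hz : Ring.inverse St (adjoint T (adjoint J (J (T z)))) = z := by
    simpa [St, adjoint_comp] using congrArg (· z) (Ring.inverse_mul_cancel St hSt)
  simp only [adjoint_comp, adjoint_adjoint, comp_apply, hz]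

end Dilation

lemma continuous_inner_left_of_forall_continuous {Ω H : Type*} [TopologicalSpace Ω]
    [NormedAddCommGroup H] [InnerProductSpace ℂ H] {F : Ω → H}
    (hF : ∀ x, Continuous fun ω => inner ℂ x (F ω)) (x : H) :
    Continuous fun ω => inner ℂ (F ω) x :=
  (Complex.continuous_conj.comp (hF x)).congr fun _ => inner_conj_symm _ _

section Frames

variable {Ω : Type*} [TopologicalSpace Ω] [MeasurableSpace Ω] {μ : Measure Ω}
  {H : Type*} [NormedAddCommGroup H] [InnerProductSpace ℂ H]

lemma adjoint_apply_eq_of_comp_eq [μ.IsOpenPosMeasure] [CompleteSpace H]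
    {H₀ : Type*} [NormedAddCommGroup H₀] [InnerProductSpace ℂ H₀] [CompleteSpace H₀]
    {F₀ : Ω → H₀} {D : Ω → H} (hF₀ : ∀ x, Continuous fun ω => inner ℂ x (F₀ ω))
    (hD : ∀ x, Continuous fun ω => inner ℂ x (D ω)) {V₀ : H₀ →L[ℂ] Lp ℂ 2 μ}
    {V : H →L[ℂ] Lp ℂ 2 μ} (hV₀ : ∀ x, (V₀ x : Ω → ℂ) =ᵐ[μ] fun ω => inner ℂ (F₀ ω) x)
    (hV : ∀ x, (V x : Ω → ℂ) =ᵐ[μ] fun ω => inner ℂ (D ω) x) {C : H →L[ℂ] H₀}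
    (hC : V₀ ∘L C = V) (ω : Ω) : adjoint C (F₀ ω) = D ω := by
  refine ext_inner_right ℂ fun x => ?_
  rw [adjoint_inner_left]
  have hae : (fun ω => inner ℂ (F₀ ω) (C x)) =ᵐ[μ] fun ω => inner ℂ (D ω) x :=
    (hV₀ (C x)).symm.trans (by simpa only [← hC, comp_apply] using hV x)
  exact congrFun (Measure.eq_of_ae_eq hae (continuous_inner_left_of_forall_continuous hF₀ _)
    (continuous_inner_left_of_forall_continuous hD x)) ω

namespace IsContinuousFrame

lemma isUnit_adjoint_comp_self [CompleteSpace H] {F : Ω → H} (hF : IsContinuousFrame μ F)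
    {V : H →L[ℂ] Lp ℂ 2 μ} (hV : ∀ x, (V x : Ω → ℂ) =ᵐ[μ] fun ω => inner ℂ (F ω) x) :
    IsUnit (adjoint V ∘L V) := by
  obtain ⟨-, C₁, _, hC₁, -, hF⟩ := hF
  refine isUnit_of_forall_le_norm_inner_map _ (c := C₁.toNNReal) (Real.toNNReal_pos.mpr hC₁)
    fun x => ?_
  have hVx : inner ℂ ((adjoint V ∘L V) x) x = ((∫ ω, ‖inner ℂ x (F ω)‖ ^ 2 ∂μ : ℝ) : ℂ) := by
    rw [comp_apply, adjoint_inner_left, L2.inner_eq_integral_of_ae_eq (hV x) (hV x),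
      ← integral_complex_ofReal]
    simp only [RCLike.conj_mul, norm_inner_symm, Complex.ofReal_pow]
    rfl
  rw [hVx, Complex.norm_real, Real.norm_of_nonneg (integral_nonneg fun _ => by positivity),
    Real.coe_toNNReal _ hC₁.le, mul_comm]
  exact (hF x).2.1

lemma adjoint_apply [CompleteSpace H] {F : Ω → H} (hF : IsContinuousFrame μ F) {T : H →L[ℂ] H}
    (hT : IsUnit T) : IsContinuousFrame μ fun ω => adjoint T (F ω) := by
  obtain ⟨hFw, C₁, C₂, hC₁, hC₁₂, hF⟩ := hF
  obtain ⟨u, rfl⟩ := hT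
  set T : H →L[ℂ] H := ↑u
  set Tinv : H →L[ℂ] H := ↑u⁻¹
  have hTinv : ∀ x, ‖x‖ ≤ ‖Tinv‖ * ‖T x‖ := fun x =>
    calc ‖x‖ = ‖(Tinv * T) x‖ := by rw [u.inv_mul]; rfl
      _ ≤ ‖Tinv‖ * ‖T x‖ := Tinv.le_opNorm _
  simp only [IsContinuousFrame, adjoint_inner_right]
  refine ⟨fun x => hFw (T x), C₁ * (‖Tinv‖ ^ 2 + 1)⁻¹, C₂ * (‖T‖ ^ 2 + 1), by positivity,
    ?_, fun x => ⟨(hF (T x)).1, ?_, ?_⟩⟩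
  · calc C₁ * (‖Tinv‖ ^ 2 + 1)⁻¹ ≤ C₁ :=
          mul_le_of_le_one_right hC₁.le (inv_le_one_of_one_le₀ (by nlinarith))
      _ ≤ C₂ := hC₁₂
      _ ≤ C₂ * (‖T‖ ^ 2 + 1) := le_mul_of_one_le_right (hC₁.le.trans hC₁₂) (by nlinarith)
  · refine le_trans ?_ (hF (T x)).2.1
    rw [mul_assoc, mul_comm (_⁻¹), ← div_eq_mul_inv]
    gcongr
    rw [div_le_iff₀ (by positivity)]
    have := pow_le_pow_left₀ (norm_nonneg x) (hTinv x) 2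
    rw [mul_pow] at this
    nlinarith [sq_nonneg ‖T x‖]
  · refine (hF (T x)).2.2.trans ?_
    rw [mul_assoc]
    refine mul_le_mul_of_nonneg_left ?_ (hC₁.le.trans hC₁₂)
    have := pow_le_pow_left₀ (norm_nonneg (T x)) (T.le_opNorm x) 2
    rw [mul_pow] at this
    nlinarith [sq_nonneg ‖x‖]

end IsContinuousFrame

end Frames

theorem continuous_dual_pair_dilation_general
    {Ω : Type v} [TopologicalSpace Ω] [MeasurableSpace Ω]
    (μ : Measure Ω)
    (h_supp : ∀ U : Set Ω, IsOpen U → U.Nonempty → 0 < μ U)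
    {H : Type u} [NormedAddCommGroup H] [InnerProductSpace ℂ H] [CompleteSpace H]
    (F G : Ω → H)
    (hF : IsContinuousFrame μ F)
    -- `G` is weakly continuous and Bessel
    (hGw : ∀ x : H, Continuous fun ω => (inner ℂ x (G ω) : ℂ))
    -- `G` is a dual of `F`:  ⟨x, y⟩ = ∫ ⟨x, F ω⟩ ⟨G ω, y⟩ dμ(ω)
    (h_dual : ∀ x y : H,
      (inner ℂ y x : ℂ) = ∫ ω, (inner ℂ (F ω) x : ℂ) * (inner ℂ y (G ω) : ℂ) ∂μ)
    -- analysis operators of `F` and `G`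
    (VF VG : H →L[ℂ] Lp ℂ 2 μ)
    (hVF : ∀ x : H, (VF x : Ω → ℂ) =ᵐ[μ] fun ω => (inner ℂ (F ω) x : ℂ))
    (hVG : ∀ x : H, (VG x : Ω → ℂ) =ᵐ[μ] fun ω => (inner ℂ (G ω) x : ℂ))
    -- an `(Ω,μ)`-frame `F₀` for some Hilbert space `H₀`, whose analysis operator
    -- has range `M` containing the ranges of `V_F` and `V_G`
    {H₀ : Type u} [NormedAddCommGroup H₀] [InnerProductSpace ℂ H₀] [CompleteSpace H₀]
    (F₀ : Ω → H₀) (hF₀ : IsContinuousFrame μ F₀)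
    (VF₀ : H₀ →L[ℂ] Lp ℂ 2 μ)
    (hVF₀ : ∀ x : H₀, (VF₀ x : Ω → ℂ) =ᵐ[μ] fun ω => (inner ℂ (F₀ ω) x : ℂ))
    (hMF : Set.range VF ⊆ Set.range VF₀)
    (hMG : Set.range VG ⊆ Set.range VF₀) :
    ∃ (K : Type u) (_ : NormedAddCommGroup K) (_ : InnerProductSpace ℂ K)
      (_ : CompleteSpace K)
      (W : H →ₗᵢ[ℂ] K) (Ft : Ω → K) (Vt : K →L[ℂ] Lp ℂ 2 μ) (Sinv : K →L[ℂ] K),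
      IsContinuousFrame μ Ft ∧
      (∀ k : K, (Vt k : Ω → ℂ) =ᵐ[μ] fun ω => (inner ℂ (Ft ω) k : ℂ)) ∧
      -- `Sinv` is the inverse of the frame operator `S̃ = Ṽ* Ṽ` of `F̃`
      ((ContinuousLinearMap.adjoint Vt).comp Vt).comp Sinv = ContinuousLinearMap.id ℂ K ∧
      Sinv.comp ((ContinuousLinearMap.adjoint Vt).comp Vt) = ContinuousLinearMap.id ℂ K ∧
      (∀ ω : Ω, (ContinuousLinearMap.adjoint W.toContinuousLinearMap) (Ft ω) = F ω) ∧
      (∀ ω : Ω,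
        (ContinuousLinearMap.adjoint W.toContinuousLinearMap) (Sinv (Ft ω)) = G ω) ∧
      Set.range Vt = Set.range VF₀ := by
  have : μ.IsOpenPosMeasure := ⟨fun U hU hne => (h_supp U hU hne).ne'⟩
  have hS₀ := hF₀.isUnit_adjoint_comp_self hVF₀
  obtain ⟨B, hB⟩ := exists_comp_eq_of_range_subset hS₀ hMF
  obtain ⟨A, hA⟩ := exists_comp_eq_of_range_subset hS₀ hMG
  have hBA : adjoint B ∘L (adjoint VF₀ ∘L VF₀ ∘L A) = ContinuousLinearMap.id ℂ H := by
    rw [← adjoint_comp_eq_id_of_dual hVF hVG h_dual, ← hB, ← hA, adjoint_comp]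
    rfl
  obtain ⟨T, hT, W, hTW, hW⟩ := exists_isUnit_isometry_comp_eq hBA
  have hFt := hF₀.adjoint_apply hT
  have hVt : ∀ k, (VF₀ ∘L T) k =ᵐ[μ] fun ω => inner ℂ (adjoint T (F₀ ω)) k := fun k => by
    simpa only [comp_apply, adjoint_inner_left] using hVF₀ (T k)
  have hSt := hFt.isUnit_adjoint_comp_self hVt
  refine ⟨H₀, _, _, _, W, _, VF₀ ∘L T, Ring.inverse _, hFt, hVt, Ring.mul_inverse_cancel _ hSt,
    Ring.inverse_mul_cancel _ hSt, fun ω => ?_, fun ω => ?_, ?_⟩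
  · rw [← comp_apply, ← adjoint_comp, hTW]
    exact adjoint_apply_eq_of_comp_eq hF₀.1 hF.1 hVF₀ hVF hB ω
  · rw [hW, ← comp_apply, ← comp_apply, comp_assoc,
      adjoint_comp_inverse_adjoint_comp_self_comp_adjoint hS₀ hT A]
    exact adjoint_apply_eq_of_comp_eq hF₀.1 hGw hVF₀ hVG hA ω
  · exact (isUnit_iff_bijective.mp hT).2.range_comp VF₀

/-- **Dilation theorem for continuous dual frame pairs** (Gabardo–Han).
Let `Ω` be a σ-compact locally compact Hausdorff space with a positive Radon measure `μ`
of full support, and `H` a separable complex Hilbert space.  Let `F` be an `(Ω,μ)`-frame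
for `H` with analysis operator `V_F`, and let `G` be a Bessel dual of `F` with analysis
operator `V_G`.  Suppose both ranges `V_F(H)` and `V_G(H)` are contained in the range
`M = V_{F₀}(H₀)` of the analysis operator of some `(Ω,μ)`-frame `F₀`.  Then there exist a
Hilbert space `K`, an isometry `W : H → K`, and an `(Ω,μ)`-frame `F̃` for `K`, with
analysis operator `Ṽ` and frame operator `S̃ = Ṽ* Ṽ` (with inverse `S̃⁻¹`), such that
`W* F̃(ω) = F(ω)` and `W*(S̃⁻¹ F̃(ω)) = G(ω)` for all `ω`, and `Ṽ(K) = M`. -/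
theorem continuous_dual_pair_dilation
    {Ω : Type v} [TopologicalSpace Ω] [T2Space Ω] [LocallyCompactSpace Ω]
    [SigmaCompactSpace Ω] [MeasurableSpace Ω] [BorelSpace Ω]
    (μ : Measure Ω) [IsFiniteMeasureOnCompacts μ] [μ.Regular]
    (h_supp : ∀ U : Set Ω, IsOpen U → U.Nonempty → 0 < μ U)
    {H : Type u} [NormedAddCommGroup H] [InnerProductSpace ℂ H] [CompleteSpace H]
    [TopologicalSpace.SeparableSpace H]
    (F G : Ω → H)
    (hF : IsContinuousFrame μ F)
    -- `G` is weakly continuous and Bessel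
    (hGw : ∀ x : H, Continuous fun ω => (inner ℂ x (G ω) : ℂ))
    (hG_Bessel : ∃ C : ℝ, 0 < C ∧ ∀ x : H,
      Integrable (fun ω => ‖(inner ℂ x (G ω) : ℂ)‖ ^ 2) μ ∧
      (∫ ω, ‖(inner ℂ x (G ω) : ℂ)‖ ^ 2 ∂μ) ≤ C * ‖x‖ ^ 2)
    -- `G` is a dual of `F`:  ⟨x, y⟩ = ∫ ⟨x, F ω⟩ ⟨G ω, y⟩ dμ(ω)
    (h_dual : ∀ x y : H,
      (inner ℂ y x : ℂ) = ∫ ω, (inner ℂ (F ω) x : ℂ) * (inner ℂ y (G ω) : ℂ) ∂μ)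
    -- analysis operators of `F` and `G`
    (VF VG : H →L[ℂ] Lp ℂ 2 μ)
    (hVF : ∀ x : H, (VF x : Ω → ℂ) =ᵐ[μ] fun ω => (inner ℂ (F ω) x : ℂ))
    (hVG : ∀ x : H, (VG x : Ω → ℂ) =ᵐ[μ] fun ω => (inner ℂ (G ω) x : ℂ))
    -- an `(Ω,μ)`-frame `F₀` for some Hilbert space `H₀`, whose analysis operator
    -- has range `M` containing the ranges of `V_F` and `V_G`
    {H₀ : Type u} [NormedAddCommGroup H₀] [InnerProductSpace ℂ H₀] [CompleteSpace H₀]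
    (F₀ : Ω → H₀) (hF₀ : IsContinuousFrame μ F₀)
    (VF₀ : H₀ →L[ℂ] Lp ℂ 2 μ)
    (hVF₀ : ∀ x : H₀, (VF₀ x : Ω → ℂ) =ᵐ[μ] fun ω => (inner ℂ (F₀ ω) x : ℂ))
    (hMF : Set.range VF ⊆ Set.range VF₀)
    (hMG : Set.range VG ⊆ Set.range VF₀) :
    ∃ (K : Type u) (_ : NormedAddCommGroup K) (_ : InnerProductSpace ℂ K)
      (_ : CompleteSpace K)
      (W : H →ₗᵢ[ℂ] K) (Ft : Ω → K) (Vt : K →L[ℂ] Lp ℂ 2 μ) (Sinv : K →L[ℂ] K),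
      IsContinuousFrame μ Ft ∧
      (∀ k : K, (Vt k : Ω → ℂ) =ᵐ[μ] fun ω => (inner ℂ (Ft ω) k : ℂ)) ∧
      -- `Sinv` is the inverse of the frame operator `S̃ = Ṽ* Ṽ` of `F̃`
      ((ContinuousLinearMap.adjoint Vt).comp Vt).comp Sinv = ContinuousLinearMap.id ℂ K ∧
      Sinv.comp ((ContinuousLinearMap.adjoint Vt).comp Vt) = ContinuousLinearMap.id ℂ K ∧
      (∀ ω : Ω, (ContinuousLinearMap.adjoint W.toContinuousLinearMap) (Ft ω) = F ω) ∧
      (∀ ω : Ω,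
        (ContinuousLinearMap.adjoint W.toContinuousLinearMap) (Sinv (Ft ω)) = G ω) ∧
      Set.range Vt = Set.range VF₀ :=
  continuous_dual_pair_dilation_general μ h_supp F G hF hGw h_dual VF VG hVF hVG F₀ hF₀ VF₀ hVF₀ hMF
    hMG

end
end

section
/- Let (Ω, Σ) be a measurable space, X and Y complex Banach spaces, and E : Σ → B(X, Y) an operator-valued measure. Then there exist a complex Banach space Z, bounded linear operators S : Z → Y and T : X → Z, and a projection-valued probability measure F : Σ → B(Z) such that E(B) = S ∘ F(B) ∘ T for all B ∈ Σ. -/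
universe u v w

/-- An operator-valued measure on a measurable space `(Ω, Σ)`: a map `E` from sets to
bounded operators that is countably additive (in the strong, equivalently weak, operator
topology) on measurable sets. -/
def IsOperatorValuedMeasure {Ω : Type w} [MeasurableSpace Ω]
    {X Y : Type*} [NormedAddCommGroup X] [NormedSpace ℂ X]
    [NormedAddCommGroup Y] [NormedSpace ℂ Y]
    (E : Set Ω → (X →L[ℂ] Y)) : Prop :=
  ∀ B : ℕ → Set Ω, (∀ i, MeasurableSet (B i)) → Pairwise (Function.onFun Disjoint B) →
    ∀ x : X, HasSum (fun i : ℕ => E (B i) x) (E (⋃ i, B i) x)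

/-!
Take for `Z` the space of all `Y`-valued vector measures on `Ω` with the supremum norm over all
sets (a vector measure is bounded), a closed subspace of `ℓ^∞(Set Ω, Y)`. Put `T x = E(·) x`,
which is bounded by the uniform boundedness principle, `S μ = μ Ω` and `F(B) μ = μ(· ∩ B)`;
then `E(B) = S F(B) T`. The one delicate point is that `F` is countably additive in the strong
operator topology: for disjoint `Bᵢ` one needs `sup_A ‖μ (A ∩ ⋃_{i ≥ n} Bᵢ)‖ → 0`, and otherwise
one could extract infinitely many disjoint sets whose measures stay away from `0`.
-/

open MeasureTheory Filter Topology Set Function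
open scoped lp ENNReal

theorem Antitone.pairwise_disjoint_sdiff_succ {α : Type*} {D : ℕ → Set α} (hD : Antitone D) :
    Pairwise (Disjoint on fun n => D n \ D (n + 1)) :=
  (pairwise_disjoint_on _).2 fun _ _ hmn =>
    disjoint_sdiff_left.mono_right (sdiff_subset.trans (hD hmn))

theorem antitone_iUnion_ge {α : Type*} (B : ℕ → Set α) : Antitone fun n => ⋃ i ≥ n, B i :=
  fun _ _ hmn => biUnion_mono (fun _ hi => hmn.trans hi) fun _ _ => subset_rfl

theorem Pairwise.iInter_iUnion_ge_eq_empty {α : Type*} {B : ℕ → Set α}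
    (hd : Pairwise (Disjoint on B)) : ⋂ n, ⋃ i ≥ n, B i = ∅ := by
  refine eq_empty_of_forall_notMem fun x hx => ?_
  obtain ⟨i, -, hxi⟩ := mem_iUnion₂.1 (mem_iInter.1 hx 0)
  obtain ⟨j, hj, hxj⟩ := mem_iUnion₂.1 (mem_iInter.1 hx (i + 1))
  exact (hd (show i ≠ j by omega)).ne_of_mem hxi hxj rfl

namespace MeasureTheory.VectorMeasure

variable {𝕜 Ω Y : Type*} [MeasurableSpace Ω] [NormedAddCommGroup Y]

theorem restrict_biUnion_finset {v : VectorMeasure Ω Y} {B : ℕ → Set Ω}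
    (hB : ∀ i, MeasurableSet (B i)) (hd : Pairwise (Disjoint on B)) (s : Finset ℕ) :
    v.restrict (⋃ i ∈ s, B i) = ∑ i ∈ s, v.restrict (B i) := by
  induction s using Finset.induction_on with
  | empty => simp
  | insert a s ha ih =>
    rw [Finset.set_biUnion_insert, Finset.sum_insert ha, ← ih, restrict_union _ (hB a)
      (s.measurableSet_biUnion fun i _ => hB i)]
    exact disjoint_iUnion₂_right.2 fun i hi => hd (ne_of_mem_of_not_mem hi ha).symm

theorem tendsto_apply_inter_of_antitone (v : VectorMeasure Ω Y) {A : Set Ω} (hA : MeasurableSet A)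
    {D : ℕ → Set Ω} (hD : ∀ n, MeasurableSet (D n)) (hanti : Antitone D)
    (hempty : ⋂ n, D n = ∅) : Tendsto (fun n => v (A ∩ D n)) atTop (𝓝 0) := by
  have := tendsto_vectorMeasure_iInter_atTop_nat (v := v)
    (fun _ _ hmn => inter_subset_inter_right _ (hanti hmn)) fun n => hA.inter (hD n)
  rwa [← inter_iInter, hempty, inter_empty, v.empty] at this

theorem exists_forall_subset_norm_le (v : VectorMeasure Ω Y) {D : ℕ → Set Ω}
    (hD : ∀ n, MeasurableSet (D n)) (hanti : Antitone D) (hempty : ⋂ n, D n = ∅)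
    {ε : ℝ} (hε : 0 < ε) : ∃ n, ∀ A, MeasurableSet A → A ⊆ D n → ‖v A‖ ≤ ε := by
  -- Otherwise one extracts disjoint sets `C k` with `ε / 2 < ‖v (C k)‖`, which is impossible
  -- since `∑ k, v (C k)` converges.
  by_contra! hlarge
  choose A hA hAD hAε using hlarge
  have hcut (n : ℕ) : ∃ m, n < m ∧ ‖v (A n ∩ D m)‖ < ε / 2 :=
    ((eventually_gt_atTop n).and <| (tendsto_zero_iff_norm_tendsto_zero.1
      (v.tendsto_apply_inter_of_antitone (hA n) hD hanti hempty)).eventually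
        (gt_mem_nhds (half_pos hε))).exists
  choose next hnext_gt hnext_small using hcut
  set g : ℕ → ℕ := fun k => next^[k] 0
  have hg_succ (k : ℕ) : g (k + 1) = next (g k) := iterate_succ_apply' next k 0
  have hg : StrictMono g := strictMono_nat_of_lt_succ fun k => hg_succ k ▸ hnext_gt (g k)
  set C : ℕ → Set Ω := fun k => A (g k) \ D (g (k + 1))
  have hC : ∀ k, MeasurableSet (C k) := fun k => (hA _).diff (hD _)
  have hC_large (k : ℕ) : ε / 2 < ‖v (C k)‖ := by
    have hsmall : ‖v (A (g k) ∩ D (g (k + 1)))‖ < ε / 2 := hg_succ k ▸ hnext_small (g k)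
    have := calc
      ε < ‖v (A (g k))‖ := hAε (g k)
      _ = ‖v (C k) + v (A (g k) ∩ D (g (k + 1)))‖ := by
        rw [← v.of_union disjoint_sdiff_inter (hC k) ((hA _).inter (hD _)), sdiff_union_inter]
      _ ≤ ‖v (C k)‖ + ‖v (A (g k) ∩ D (g (k + 1)))‖ := norm_add_le _ _
    linarith
  have hC_disj : Pairwise (Disjoint on C) :=
    (hanti.comp_monotone hg.monotone).pairwise_disjoint_sdiff_succ.mono fun k l h =>
      h.mono (sdiff_subset_sdiff_left (hAD _)) (sdiff_subset_sdiff_left (hAD _))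
  have hlim := (v.hasSum_of_disjoint_iUnion hC hC_disj).summable.tendsto_atTop_zero
  obtain ⟨k, hk⟩ := ((tendsto_zero_iff_norm_tendsto_zero.1 hlim).eventually
    (gt_mem_nhds (half_pos hε))).exists
  exact (hC_large k).not_gt hk

variable [NormedSpace ℝ Y]

noncomputable def toLinfty : VectorMeasure Ω Y →+ ℓ^∞(Set Ω, Y) where
  toFun v := ⟨⇑v, memℓp_infty ⟨v.bound, by rintro _ ⟨A, rfl⟩; exact v.norm_apply_le_bound⟩⟩
  map_zero' := rfl
  map_add' _ _ := rfl

@[simp] theorem toLinfty_apply (v : VectorMeasure Ω Y) (A : Set Ω) : toLinfty v A = v A := rfl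

theorem toLinfty_injective : Injective (toLinfty : VectorMeasure Ω Y → ℓ^∞(Set Ω, Y)) :=
  fun _ _ h => ext fun A _ => congrArg (fun f : ℓ^∞(Set Ω, Y) => f A) h

theorem norm_toLinfty_restrict_le (v : VectorMeasure Ω Y) {D : Set Ω} {ε : ℝ} (hε : 0 ≤ ε)
    (h : ∀ A, MeasurableSet A → A ⊆ D → ‖v A‖ ≤ ε) : ‖toLinfty (v.restrict D)‖ ≤ ε := by
  refine lp.norm_le_of_forall_le hε fun A => ?_
  by_cases hD : MeasurableSet D
  · by_cases hA : MeasurableSet A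
    · rw [toLinfty_apply, restrict_apply _ hD hA]
      exact h _ (hA.inter hD) inter_subset_right
    · simpa [restrict_apply, hD, hA, v.not_measurable hA] using hε
  · simpa [restrict_not_measurable _ hD] using hε

theorem norm_toLinfty_restrict_le_norm (v : VectorMeasure Ω Y) (D : Set Ω) :
    ‖toLinfty (v.restrict D)‖ ≤ ‖toLinfty v‖ :=
  v.norm_toLinfty_restrict_le (norm_nonneg _) fun A _ _ =>
    lp.norm_apply_le_norm ENNReal.top_ne_zero (toLinfty v) A

theorem hasSum_toLinfty_restrict (v : VectorMeasure Ω Y) {B : ℕ → Set Ω}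
    (hB : ∀ i, MeasurableSet (B i)) (hd : Pairwise (Disjoint on B)) :
    HasSum (fun i => toLinfty (v.restrict (B i))) (toLinfty (v.restrict (⋃ i, B i))) := by
  rw [HasSum, SummationFilter.unconditional_filter, Metric.tendsto_atTop]
  intro ε hε
  obtain ⟨n, hn⟩ := v.exists_forall_subset_norm_le
    (fun n => .biUnion (to_countable _) fun i _ => hB i) (antitone_iUnion_ge B)
    hd.iInter_iUnion_ge_eq_empty (half_pos hε)
  refine ⟨Finset.range n, fun s hs => ?_⟩
  have hU : MeasurableSet (⋃ i, B i) := .iUnion hB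
  have hUs : MeasurableSet (⋃ i ∈ s, B i) := s.measurableSet_biUnion fun i _ => hB i
  have hrest : (⋃ i, B i) \ ⋃ i ∈ s, B i ⊆ ⋃ i ≥ n, B i := by
    rintro x ⟨hxU, hxs⟩
    obtain ⟨i, hxi⟩ := mem_iUnion.1 hxU
    refine mem_iUnion₂.2 ⟨i, not_lt.1 fun hi => hxs ?_, hxi⟩
    exact mem_biUnion (hs (Finset.mem_range.2 hi)) hxi
  rw [← map_sum, ← restrict_biUnion_finset hB hd, dist_eq_norm', ← map_sub,
    ← v.restrict_inter_add_sdiff hU hUs,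
    inter_eq_right.2 (iUnion₂_subset fun i _ => subset_iUnion B i), add_sub_cancel_left]
  exact (v.norm_toLinfty_restrict_le (half_pos hε).le fun A hA hAD => hn A hA (hAD.trans hrest)
    ).trans_lt (half_lt_self hε)

theorem isClosed_range_toLinfty :
    IsClosed (range (toLinfty : VectorMeasure Ω Y → ℓ^∞(Set Ω, Y))) := by
  refine closure_subset_iff_isClosed.1 fun f hf => ?_
  have heval (A : Set Ω) : Continuous fun g : ℓ^∞(Set Ω, Y) => g A :=
    (lp.lipschitzWith_one_eval ∞ A).continuous
  have hzero (A : Set Ω) (hA : ¬MeasurableSet A) : f A = 0 :=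
    EqOn.closure (f := fun g : ℓ^∞(Set Ω, Y) => g A) (g := 0)
      (by rintro _ ⟨v, rfl⟩; exact v.not_measurable hA) (heval A) continuous_const hf
  have hfinite {B : ℕ → Set Ω} (hB : ∀ i, MeasurableSet (B i)) (hd : Pairwise (Disjoint on B))
      (s : Finset ℕ) : f (⋃ i ∈ s, B i) = ∑ i ∈ s, f (B i) :=
    EqOn.closure (f := fun g : ℓ^∞(Set Ω, Y) => g (⋃ i ∈ s, B i))
      (g := fun g : ℓ^∞(Set Ω, Y) => ∑ i ∈ s, g (B i))
      (by rintro _ ⟨v, rfl⟩; exact of_biUnion_finset (hd.set_pairwise _) fun i _ => hB i)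
      (heval _) (continuous_finsetSum _ fun i _ => heval _) hf
  -- The limit along partial unions survives in the closure because the evaluations at these
  -- unions are equicontinuous, unlike the partial sums `g ↦ ∑ i ∈ s, g (B i)`.
  have htendsto {B : ℕ → Set Ω} (hB : ∀ i, MeasurableSet (B i)) (hd : Pairwise (Disjoint on B)) :
      Tendsto (fun s : Finset ℕ => f (⋃ i ∈ s, B i)) atTop (𝓝 (f (⋃ i, B i))) := by
    refine closure_minimal (s := range toLinfty) (t := {g : ℓ^∞(Set Ω, Y) |
      Tendsto (fun s : Finset ℕ => g (⋃ i ∈ s, B i)) atTop (𝓝 (g (⋃ i, B i)))}) ?_ ?_ hf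
    · rintro _ ⟨v, rfl⟩
      have := v.hasSum_of_disjoint_iUnion hB hd
      rw [HasSum, SummationFilter.unconditional_filter] at this
      simpa [of_biUnion_finset (hd.set_pairwise _) fun i _ => hB i] using this
    · exact (LipschitzWith.uniformEquicontinuous (fun (s : Finset ℕ) (g : ℓ^∞(Set Ω, Y)) =>
        g (⋃ i ∈ s, B i)) 1 fun s => lp.lipschitzWith_one_eval ∞ _
        ).equicontinuous.isClosed_setOfPred_tendsto (heval _)
  refine ⟨{ measureOf' := f
            empty' := by
              simpa using hfinite (B := fun _ => ∅) (fun _ => .empty)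
                (fun _ _ _ => disjoint_bot_left) ∅
            not_measurable' := hzero
            m_iUnion' := fun B hB hd => ?_ }, rfl⟩
  rw [HasSum, SummationFilter.unconditional_filter]
  simpa only [← hfinite hB hd] using htendsto hB hd

variable (𝕜) [NormedField 𝕜] [NormedSpace 𝕜 Y]

noncomputable def toLinftyₗ : VectorMeasure Ω Y →ₗ[𝕜] ℓ^∞(Set Ω, Y) :=
  { toLinfty with map_smul' _ _ := rfl }

variable (Ω Y) in
noncomputable def linftyRange : Submodule 𝕜 ℓ^∞(Set Ω, Y) := LinearMap.range (toLinftyₗ 𝕜)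

instance [CompleteSpace Y] : CompleteSpace (linftyRange 𝕜 Ω Y) :=
  (isClosed_range_toLinfty (Ω := Ω) (Y := Y)).completeSpace_coe

noncomputable def equivLinftyRange : VectorMeasure Ω Y ≃ₗ[𝕜] linftyRange 𝕜 Ω Y :=
  LinearEquiv.ofInjective (toLinftyₗ 𝕜) toLinfty_injective

@[simp] theorem coe_equivLinftyRange (v : VectorMeasure Ω Y) :
    (equivLinftyRange 𝕜 v : ℓ^∞(Set Ω, Y)) = toLinfty v := rfl

noncomputable def restrictCLM (B : Set Ω) : linftyRange 𝕜 Ω Y →L[𝕜] linftyRange 𝕜 Ω Y :=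
  LinearMap.mkContinuous ((equivLinftyRange 𝕜).toLinearMap ∘ₗ restrictₗ B ∘ₗ
    (equivLinftyRange 𝕜).symm.toLinearMap) 1 fun z => by
    obtain ⟨v, rfl⟩ := (equivLinftyRange 𝕜).surjective z
    simpa using norm_toLinfty_restrict_le_norm v B

@[simp] theorem restrictCLM_equivLinftyRange (B : Set Ω) (v : VectorMeasure Ω Y) :
    restrictCLM 𝕜 B (equivLinftyRange 𝕜 v) = equivLinftyRange 𝕜 (v.restrict B) := by
  simp [restrictCLM]

noncomputable def evalUnivCLM : linftyRange 𝕜 Ω Y →L[𝕜] Y :=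
  (lp.evalCLM 𝕜 (fun _ : Set Ω => Y) ∞ univ).comp (Submodule.subtypeL _)

@[simp] theorem evalUnivCLM_equivLinftyRange (v : VectorMeasure Ω Y) :
    evalUnivCLM 𝕜 (equivLinftyRange 𝕜 v) = v univ := rfl

end MeasureTheory.VectorMeasure

open MeasureTheory.VectorMeasure

variable {Ω Y : Type*} [MeasurableSpace Ω] [NormedAddCommGroup Y] [NormedSpace ℂ Y]

def IsProjectionValuedProbabilityMeasure {Z : Type*} [NormedAddCommGroup Z] [NormedSpace ℂ Z]
    (F : Set Ω → Z →L[ℂ] Z) : Prop :=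
  IsOperatorValuedMeasure F ∧ F univ = ContinuousLinearMap.id ℂ Z ∧
    ∀ B, MeasurableSet B → (F B).comp (F B) = F B

theorem IsProjectionValuedProbabilityMeasure.conj {Z W : Type*} [NormedAddCommGroup Z]
    [NormedSpace ℂ Z] [NormedAddCommGroup W] [NormedSpace ℂ W] {F : Set Ω → Z →L[ℂ] Z}
    (hF : IsProjectionValuedProbabilityMeasure F) (e : Z ≃L[ℂ] W) :
    IsProjectionValuedProbabilityMeasure fun B =>
      (e : Z →L[ℂ] W).comp ((F B).comp (e.symm : W →L[ℂ] Z)) := by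
  obtain ⟨hF, hF_univ, hF_idem⟩ := hF
  refine ⟨fun B hB hd w => by simpa using (e : Z →L[ℂ] W).hasSum (hF B hB hd (e.symm w)),
    by ext; simp [hF_univ], fun B hB => ?_⟩
  ext w
  simpa using congrArg e (DFunLike.congr_fun (hF_idem B hB) (e.symm w))

theorem isProjectionValuedProbabilityMeasure_restrictCLM :
    IsProjectionValuedProbabilityMeasure
      (restrictCLM ℂ : Set Ω → linftyRange ℂ Ω Y →L[ℂ] linftyRange ℂ Ω Y) := by
  refine ⟨fun B hB hd z => ?_, ?_, fun B hB => ?_⟩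
  · obtain ⟨v, rfl⟩ := (equivLinftyRange ℂ).surjective z
    simp only [restrictCLM_equivLinftyRange]
    rw [← Topology.IsInducing.subtypeVal.hasSum_iff (g := (linftyRange ℂ Ω Y).subtype)]
    exact v.hasSum_toLinfty_restrict hB hd
  · ext1 z
    obtain ⟨v, rfl⟩ := (equivLinftyRange ℂ).surjective z
    simp
  · ext1 z
    obtain ⟨v, rfl⟩ := (equivLinftyRange ℂ).surjective z
    simp [restrict_restrict _ hB hB]

namespace IsOperatorValuedMeasure

variable {X : Type*} [NormedAddCommGroup X] [NormedSpace ℂ X] {E : Set Ω → X →L[ℂ] Y}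

theorem apply_empty (hE : IsOperatorValuedMeasure E) : E ∅ = 0 := by
  ext x
  exact tendsto_const_nhds_iff.1 (hE (fun _ => ∅) (fun _ => .empty)
    (fun _ _ _ => disjoint_bot_left) x).summable.tendsto_atTop_zero

open Classical in
noncomputable def vectorMeasure (hE : IsOperatorValuedMeasure E) (x : X) : VectorMeasure Ω Y where
  measureOf' A := if MeasurableSet A then E A x else 0
  empty' := by simp [hE.apply_empty]
  not_measurable' A hA := if_neg hA
  m_iUnion' B hB hd := by simpa [hB, MeasurableSet.iUnion hB] using hE B hB hd x

theorem vectorMeasure_apply (hE : IsOperatorValuedMeasure E) {A : Set Ω} (hA : MeasurableSet A)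
    (x : X) : hE.vectorMeasure x A = E A x :=
  if_pos hA

noncomputable def vectorMeasureₗ (hE : IsOperatorValuedMeasure E) :
    X →ₗ[ℂ] VectorMeasure Ω Y where
  toFun := hE.vectorMeasure
  map_add' x y := ext fun A hA => by simp [hE.vectorMeasure_apply hA]
  map_smul' c x := ext fun A hA => by simp [hE.vectorMeasure_apply hA]

theorem exists_norm_le [CompleteSpace X] (hE : IsOperatorValuedMeasure E) :
    ∃ C, ∀ A, MeasurableSet A → ‖E A‖ ≤ C := by
  obtain ⟨C, hC⟩ := banach_steinhaus (g := fun A : {A : Set Ω // MeasurableSet A} => E A)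
    fun x => ⟨(hE.vectorMeasure x).bound, fun A => by
      simpa [hE.vectorMeasure_apply A.2] using (hE.vectorMeasure x).norm_apply_le_bound (s := A)⟩
  exact ⟨C, fun A hA => hC ⟨A, hA⟩⟩

theorem exists_clm_apply_eq_vectorMeasure [CompleteSpace X] (hE : IsOperatorValuedMeasure E) :
    ∃ T : X →L[ℂ] linftyRange ℂ Ω Y, ∀ x, T x = equivLinftyRange ℂ (hE.vectorMeasure x) := by
  obtain ⟨C, hC⟩ := hE.exists_norm_le
  have hC₀ : 0 ≤ C := (norm_nonneg _).trans (hC univ .univ)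
  refine ⟨LinearMap.mkContinuous ((equivLinftyRange ℂ).toLinearMap ∘ₗ hE.vectorMeasureₗ) C
    fun x => lp.norm_le_of_forall_le (by positivity) fun A => ?_, fun x => rfl⟩
  by_cases hA : MeasurableSet A
  · simpa [vectorMeasureₗ, hE.vectorMeasure_apply hA] using (E A).le_of_opNorm_le (hC A hA) x
  · simpa [vectorMeasureₗ, (hE.vectorMeasure x).not_measurable hA] using by positivity

end IsOperatorValuedMeasure

/-- **The general dilation theorem for operator-valued measures** (Han–Larson–Liu–Liu).
Every operator-valued measure `E : Σ → B(X,Y)` between complex Banach spaces dilates to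
a projection-valued probability measure `F : Σ → B(Z)` on some complex Banach space `Z`:
`E(B) = S ∘ F(B) ∘ T` for bounded operators `T : X → Z` and `S : Z → Y`. -/
theorem ovm_dilation_to_projection_valued_measure
    {Ω : Type w} [MeasurableSpace Ω]
    {X : Type u} [NormedAddCommGroup X] [NormedSpace ℂ X] [CompleteSpace X]
    {Y : Type v} [NormedAddCommGroup Y] [NormedSpace ℂ Y] [CompleteSpace Y]
    (E : Set Ω → (X →L[ℂ] Y)) (hE : IsOperatorValuedMeasure E) :
    ∃ (Z : Type (max u v w)) (_ : NormedAddCommGroup Z) (_ : NormedSpace ℂ Z)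
      (_ : CompleteSpace Z)
      (S : Z →L[ℂ] Y) (T : X →L[ℂ] Z) (F : Set Ω → (Z →L[ℂ] Z)),
      IsOperatorValuedMeasure F ∧
      F Set.univ = ContinuousLinearMap.id ℂ Z ∧
      (∀ B : Set Ω, MeasurableSet B → (F B).comp (F B) = F B) ∧
      (∀ B : Set Ω, MeasurableSet B → E B = S.comp ((F B).comp T)) := by
  obtain ⟨T, hT⟩ := hE.exists_clm_apply_eq_vectorMeasure
  let Z := ULift.{max u v w} (linftyRange ℂ Ω Y)
  let e : linftyRange ℂ Ω Y ≃L[ℂ] Z := ContinuousLinearEquiv.ulift.symm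
  obtain ⟨hF, hF_univ, hF_idem⟩ :=
    (isProjectionValuedProbabilityMeasure_restrictCLM (Ω := Ω) (Y := Y)).conj (W := Z) e
  refine ⟨Z, inferInstance, inferInstance, inferInstance,
    (evalUnivCLM ℂ).comp (e.symm : Z →L[ℂ] linftyRange ℂ Ω Y),
    (e : linftyRange ℂ Ω Y →L[ℂ] Z).comp T, _, hF, hF_univ, hF_idem, fun B hB => ?_⟩
  ext x
  simp [e, hT, hE.vectorMeasure_apply hB]
end

section
/- In H = L²([0,1], ℂ), define for each n ∈ ℤ the functions x_n(t) = e^{2πint}·t^{-1/4} and y_n(t) = e^{2πint}·t^{1/4} (both lie in L²([0,1])). Then (x_n, y_n)_{n∈ℤ} is not a framing for H: for f(t) = t^{-1/4} ∈ L²([0,1]), the family (⟨f, x_n⟩·y_n)_{n∈ℤ} is not summable in L²([0,1]) (equivalently, the series ∑_{n∈ℤ} ⟨f, x_n⟩ y_n does not converge unconditionally). -/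
/-!
Here `⟪xₙ, f⟫ = ∫₀¹ e^{-2πint} t^{-1/2} dt`, and the substitution `u = nt` turns its
real part into `n^{-1/2} ∫₀ⁿ cos (2πu) u^{-1/2} du`. Over each period starting where the cosine
turns positive the integral is nonnegative because the weight decreases, so
`Re ⟪xₙ, f⟫ ≥ n^{-1/2} ∫₀^{3/4} cos (2πu) u^{-1/2} du ≥ n^{-1/2} / 10`. Since `‖yₙ‖² = 2/3`, the
terms `aₙ = ⟪xₙ, f⟫ yₙ` have `∑ ‖aₙ‖² = ∞`.

In an inner product space, if all finite partial sums of `(aₙ)` have norm `≤ B`, then choosing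
signs one at a time by the parallelogram law gives `∑ ‖aₙ‖² ≤ (2B)²`. Summability bounds the
partial sums, and so does the reconstruction formula: by Banach–Steinhaus the operators
`∑_{n ∈ F} ⟪yₙ, ·⟫ xₙ` are uniformly bounded, hence so are their adjoints `∑_{n ∈ F} ⟪xₙ, ·⟫ yₙ`,
whose values at `f` are the partial sums of `(aₙ)`.
-/

open MeasureTheory
open scoped ENNReal Real

noncomputable section

/-- Lebesgue measure restricted to `[0,1]`. -/
def mu01 : Measure ℝ := volume.restrict (Set.Icc (0 : ℝ) 1)

open Finset InnerProductSpace

section FiniteSums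

variable {ι E : Type*}

theorem Summable.exists_norm_finset_sum_le [SeminormedAddCommGroup E] {a : ι → E}
    (ha : Summable a) : ∃ B, ∀ F : Finset ι, ‖∑ n ∈ F, a n‖ ≤ B := by
  classical
  obtain ⟨s, hs⟩ := ha.vanishing (Metric.ball_mem_nhds 0 one_pos)
  refine ⟨∑ n ∈ s, ‖a n‖ + 1, fun F => ?_⟩
  rw [← sum_inter_add_sum_sdiff F s]
  refine (norm_add_le _ _).trans (add_le_add ?_ ?_)
  · exact (norm_sum_le _ _).trans
      (sum_le_sum_of_subset_of_nonneg inter_subset_right fun _ _ _ => norm_nonneg _)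
  · simpa using (mem_ball_zero_iff.1 (hs (F \ s) sdiff_disjoint)).le

variable [NormedAddCommGroup E]

theorem exists_subset_sum_sq_norm_le_norm_sub_sq (𝕜 : Type*) [RCLike 𝕜] [InnerProductSpace 𝕜 E]
    [DecidableEq ι] (a : ι → E) (F : Finset ι) :
    ∃ s ⊆ F, ∑ n ∈ F, ‖a n‖ ^ 2 ≤ ‖∑ n ∈ s, a n - ∑ n ∈ F \ s, a n‖ ^ 2 := by
  induction F using Finset.induction_on with
  | empty => exact ⟨∅, by simp⟩
  | @insert i F hi ih =>
    obtain ⟨s, hsF, hs⟩ := ih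
    have his : i ∉ s := fun h => hi (hsF h)
    set u := ∑ n ∈ s, a n - ∑ n ∈ F \ s, a n with hu
    have hpar := parallelogram_law_with_norm 𝕜 u (a i)
    rw [sum_insert hi]
    rcases le_total ‖u - a i‖ ‖u + a i‖ with h | h
    · refine ⟨insert i s, insert_subset_insert i hsF, ?_⟩
      rw [sum_insert his, insert_sdiff_insert, sdiff_insert_of_notMem hi,
        show a i + ∑ n ∈ s, a n - ∑ n ∈ F \ s, a n = u + a i by rw [hu]; abel]
      nlinarith [mul_self_le_mul_self (norm_nonneg _) h]
    · refine ⟨s, hsF.trans (subset_insert i F), ?_⟩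
      rw [insert_sdiff_of_notMem _ his, sum_insert (fun h => hi (mem_sdiff.1 h).1),
        show ∑ n ∈ s, a n - (a i + ∑ n ∈ F \ s, a n) = u - a i by rw [hu]; abel]
      nlinarith [mul_self_le_mul_self (norm_nonneg _) h]

theorem summable_sq_norm_of_norm_finset_sum_le (𝕜 : Type*) [RCLike 𝕜] [InnerProductSpace 𝕜 E]
    {a : ι → E} {B : ℝ}
    (hB : ∀ F : Finset ι, ‖∑ n ∈ F, a n‖ ≤ B) : Summable fun n => ‖a n‖ ^ 2 := by
  classical
  refine summable_of_sum_le (c := (2 * B) ^ 2) (fun n => sq_nonneg _) fun F => ?_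
  obtain ⟨s, -, hs⟩ := exists_subset_sum_sq_norm_le_norm_sub_sq 𝕜 a F
  have hsub : ‖∑ n ∈ s, a n - ∑ n ∈ F \ s, a n‖ ≤ 2 * B := by
    linarith [norm_sub_le (∑ n ∈ s, a n) (∑ n ∈ F \ s, a n), hB s, hB (F \ s)]
  exact hs.trans (pow_le_pow_left₀ (norm_nonneg _) hsub 2)

variable {𝕜 : Type*} [RCLike 𝕜] [InnerProductSpace 𝕜 E] [CompleteSpace E]

theorem exists_norm_finset_sum_inner_smul_le {x y : ι → E}
    (h : ∀ v, Summable fun n => inner 𝕜 (y n) v • x n) (f : E) :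
    ∃ B, ∀ F : Finset ι, ‖∑ n ∈ F, inner 𝕜 (x n) f • y n‖ ≤ B := by
  let T : Finset ι → E →L[𝕜] E := fun F => ∑ n ∈ F, rankOne 𝕜 (x n) (y n)
  obtain ⟨C, hC⟩ := banach_steinhaus (g := T) fun v => by
    simpa [T] using (h v).exists_norm_finset_sum_le
  refine ⟨C * ‖f‖, fun F => ?_⟩
  have hadj : ∑ n ∈ F, inner 𝕜 (x n) f • y n = ContinuousLinearMap.adjoint (T F) f := by
    simp [T, map_sum]
  calc ‖∑ n ∈ F, inner 𝕜 (x n) f • y n‖ ≤ ‖ContinuousLinearMap.adjoint (T F)‖ * ‖f‖ := by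
        rw [hadj]; exact (ContinuousLinearMap.adjoint (T F)).le_opNorm f
    _ ≤ C * ‖f‖ := by
        rw [LinearIsometryEquiv.norm_map]; gcongr; exact hC F

end FiniteSums

section FresnelIntegrand

open Real intervalIntegral

def fresnelIntegrand (u : ℝ) : ℝ := cos (2 * π * u) * u ^ (-(1 / 2) : ℝ)

theorem intervalIntegrable_fresnelIntegrand (a b : ℝ) :
    IntervalIntegrable fresnelIntegrand volume a b :=
  (intervalIntegrable_rpow' (by norm_num)).continuousOn_mul (by fun_prop)

theorem integral_cos_two_pi_mul (a b : ℝ) :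
    ∫ u in a..b, cos (2 * π * u) = (sin (2 * π * b) - sin (2 * π * a)) / (2 * π) := by
  rw [integral_comp_mul_left (fun u => cos u) (by positivity), integral_cos, smul_eq_mul]
  field_simp

theorem cos_two_pi_mul_nonneg {m : ℕ} {u : ℝ} (h₁ : m - 1 / 4 ≤ u) (h₂ : u ≤ m + 1 / 4) :
    0 ≤ cos (2 * π * u) := by
  rw [← cos_sub_nat_mul_two_pi _ m]
  apply cos_nonneg_of_mem_Icc
  constructor <;> nlinarith [pi_pos]

theorem cos_two_pi_mul_nonpos {m : ℕ} {u : ℝ} (h₁ : m + 1 / 4 ≤ u) (h₂ : u ≤ m + 3 / 4) :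
    cos (2 * π * u) ≤ 0 := by
  rw [← cos_sub_nat_mul_two_pi _ m]
  apply cos_nonpos_of_pi_div_two_le_of_le <;> nlinarith [pi_pos]

/-- With `c` the value of the decreasing weight `u ^ (-1/2)` where `cos (2πu)` changes sign,
the integrand dominates `c * cos (2πu)`, whose integral over a period vanishes. -/
theorem integral_fresnelIntegrand_period_nonneg (k : ℕ) :
    0 ≤ ∫ u in (k + 3 / 4 : ℝ)..(k + 7 / 4), fresnelIntegrand u := by
  set c := ((k : ℝ) + 5 / 4) ^ (-(1 / 2) : ℝ)
  have hk : (0 : ℝ) ≤ k := k.cast_nonneg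
  have hle : ∀ u ∈ Set.Icc (k + 3 / 4 : ℝ) (k + 7 / 4),
      c * cos (2 * π * u) ≤ fresnelIntegrand u := by
    rintro u ⟨hu₁, hu₂⟩
    rw [fresnelIntegrand, mul_comm c]
    rcases le_total u (k + 5 / 4) with h | h
    · refine mul_le_mul_of_nonneg_left ?_ (cos_two_pi_mul_nonneg (m := k + 1) ?_ ?_)
      · exact rpow_le_rpow_of_nonpos (by linarith) h (by norm_num)
      · push_cast; linarith
      · push_cast; linarith
    · refine mul_le_mul_of_nonpos_left ?_ (cos_two_pi_mul_nonpos (m := k + 1) ?_ ?_)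
      · exact rpow_le_rpow_of_nonpos (by linarith) h (by norm_num)
      · push_cast; linarith
      · push_cast; linarith
  have hzero : ∫ u in (k + 3 / 4 : ℝ)..(k + 7 / 4), c * cos (2 * π * u) = 0 := by
    rw [intervalIntegral.integral_const_mul, integral_cos_two_pi_mul,
      show 2 * π * (k + 7 / 4) = 2 * π * (k + 3 / 4) + (1 : ℕ) * (2 * π) by push_cast; ring,
      sin_add_nat_mul_two_pi]
    simp
  rw [← hzero]
  exact integral_mono_on (by linarith) (Continuous.intervalIntegrable (by fun_prop) _ _)
    (intervalIntegrable_fresnelIntegrand _ _) hle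

theorem integral_fresnelIntegrand_tail_nonneg (k : ℕ) :
    0 ≤ ∫ u in (k + 3 / 4 : ℝ)..(k + 1), fresnelIntegrand u := by
  refine integral_nonneg (by linarith) fun u ⟨hu₁, hu₂⟩ => ?_
  have hk : (0 : ℝ) ≤ k := k.cast_nonneg
  refine mul_nonneg (cos_two_pi_mul_nonneg (m := k + 1) ?_ ?_) (rpow_nonneg (by linarith) _)
  · push_cast; linarith
  · push_cast; linarith

theorem one_sub_pi_sq_div_forty_le_integral_fresnelIntegrand :
    1 - π ^ 2 / 40 ≤ ∫ u in (0 : ℝ)..(1 / 4), fresnelIntegrand u := by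
  have hle : ∀ u ∈ Set.Icc (0 : ℝ) (1 / 4),
      u ^ (-(1 / 2) : ℝ) - 2 * π ^ 2 * u ^ (3 / 2 : ℝ) ≤ fresnelIntegrand u := by
    rintro u ⟨hu, -⟩
    have h32 : u ^ (3 / 2 : ℝ) = u ^ 2 * u ^ (-(1 / 2) : ℝ) := by
      rw [← rpow_natCast, ← rpow_add' hu (by norm_num)]
      norm_num
    calc u ^ (-(1 / 2) : ℝ) - 2 * π ^ 2 * u ^ (3 / 2 : ℝ)
        = (1 - (2 * π * u) ^ 2 / 2) * u ^ (-(1 / 2) : ℝ) := by rw [h32]; ring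
      _ ≤ fresnelIntegrand u :=
        mul_le_mul_of_nonneg_right one_sub_sq_div_two_le_cos (rpow_nonneg hu _)
  have hint₁ : IntervalIntegrable (fun u : ℝ => u ^ (-(1 / 2) : ℝ)) volume 0 (1 / 4) :=
    intervalIntegrable_rpow' (by norm_num)
  have hint₂ : IntervalIntegrable (fun u : ℝ => 2 * π ^ 2 * u ^ (3 / 2 : ℝ)) volume 0 (1 / 4) :=
    (intervalIntegrable_rpow' (by norm_num)).const_mul _
  have hval : ∫ u in (0 : ℝ)..(1 / 4), (u ^ (-(1 / 2) : ℝ) - 2 * π ^ 2 * u ^ (3 / 2 : ℝ))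
      = 1 - π ^ 2 / 40 := by
    have h₁ : (1 / 4 : ℝ) ^ (1 / 2 : ℝ) = 1 / 2 := by
      rw [show (1 / 4 : ℝ) = (1 / 2) ^ (2 : ℝ) by norm_num, ← rpow_mul (by norm_num)]
      norm_num
    have h₂ : (1 / 4 : ℝ) ^ (5 / 2 : ℝ) = 1 / 32 := by
      rw [show (1 / 4 : ℝ) = (1 / 2) ^ (2 : ℝ) by norm_num, ← rpow_mul (by norm_num)]
      norm_num
    rw [integral_sub hint₁ hint₂, intervalIntegral.integral_const_mul,
      integral_rpow (Or.inl (by norm_num)), integral_rpow (Or.inl (by norm_num))]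
    norm_num [h₁, h₂]
    ring
  rw [← hval]
  exact integral_mono_on (by norm_num) (hint₁.sub hint₂) (intervalIntegrable_fresnelIntegrand _ _)
    hle

theorem neg_two_div_pi_le_integral_fresnelIntegrand :
    -(2 / π) ≤ ∫ u in (1 / 4 : ℝ)..(3 / 4), fresnelIntegrand u := by
  have hle : ∀ u ∈ Set.Icc (1 / 4 : ℝ) (3 / 4), 2 * cos (2 * π * u) ≤ fresnelIntegrand u := by
    rintro u ⟨hu₁, hu₂⟩
    have hw : u ^ (-(1 / 2) : ℝ) ≤ 2 := by
      calc u ^ (-(1 / 2) : ℝ) ≤ (1 / 4 : ℝ) ^ (-(1 / 2) : ℝ) :=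
            rpow_le_rpow_of_nonpos (by norm_num) hu₁ (by norm_num)
        _ = 2 := by
          rw [show (1 / 4 : ℝ) = 2 ^ (-2 : ℝ) by norm_num, ← rpow_mul (by norm_num)]
          norm_num
    rw [fresnelIntegrand, mul_comm 2]
    exact mul_le_mul_of_nonpos_left hw
      (cos_two_pi_mul_nonpos (m := 0) (by simpa using hu₁) (by simpa using hu₂))
  have hval : ∫ u in (1 / 4 : ℝ)..(3 / 4), 2 * cos (2 * π * u) = -(2 / π) := by
    rw [intervalIntegral.integral_const_mul, integral_cos_two_pi_mul,
      show 2 * π * (3 / 4) = -(π / 2) + (1 : ℕ) * (2 * π) by push_cast; ring,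
      show 2 * π * (1 / 4) = π / 2 by ring, sin_add_nat_mul_two_pi, sin_neg, sin_pi_div_two]
    field_simp
    ring
  rw [← hval]
  exact integral_mono_on (by norm_num) (Continuous.intervalIntegrable (by fun_prop) _ _)
    (intervalIntegrable_fresnelIntegrand _ _) hle

theorem one_div_ten_le_integral_fresnelIntegrand_zero_three_div_four :
    1 / 10 ≤ ∫ u in (0 : ℝ)..(3 / 4), fresnelIntegrand u := by
  rw [← integral_add_adjacent_intervals (intervalIntegrable_fresnelIntegrand 0 (1 / 4))
    (intervalIntegrable_fresnelIntegrand _ _)]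
  have hpi₁ : π < 3.1416 := pi_lt_d6.trans (by norm_num)
  have hpi₂ : 3.1415 < π := pi_gt_d6.trans' (by norm_num)
  have h₁ : 2 / π ≤ 0.6367 := by rw [div_le_iff₀ pi_pos]; nlinarith
  linarith [one_sub_pi_sq_div_forty_le_integral_fresnelIntegrand,
    neg_two_div_pi_le_integral_fresnelIntegrand, (by nlinarith : π ^ 2 ≤ 9.8697)]

theorem one_div_ten_le_integral_fresnelIntegrand {n : ℕ} (hn : 1 ≤ n) :
    1 / 10 ≤ ∫ u in (0 : ℝ)..n, fresnelIntegrand u := by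
  obtain ⟨m, rfl⟩ := Nat.exists_eq_add_of_le' hn
  have hperiods : 0 ≤ ∫ u in (3 / 4 : ℝ)..(m + 3 / 4), fresnelIntegrand u := by
    have := sum_integral_adjacent_intervals (a := fun k : ℕ => (k + 3 / 4 : ℝ)) (n := m)
      (fun k _ => intervalIntegrable_fresnelIntegrand _ _)
    simp only [Nat.cast_zero, zero_add, Nat.cast_succ] at this
    rw [← this]
    refine sum_nonneg fun k _ => ?_
    rw [show (k : ℝ) + 1 + 3 / 4 = k + 7 / 4 by ring]
    exact integral_fresnelIntegrand_period_nonneg k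
  have htail := integral_fresnelIntegrand_tail_nonneg m
  rw [← integral_add_adjacent_intervals (intervalIntegrable_fresnelIntegrand 0 (3 / 4))
    (intervalIntegrable_fresnelIntegrand _ _),
    ← integral_add_adjacent_intervals (intervalIntegrable_fresnelIntegrand (3 / 4) (m + 3 / 4))
    (intervalIntegrable_fresnelIntegrand _ _)]
  push_cast
  linarith [one_div_ten_le_integral_fresnelIntegrand_zero_three_div_four]

theorem integral_cos_mul_rpow_eq {c : ℝ} (hc : 0 < c) :
    ∫ t in (0 : ℝ)..1, cos (2 * π * c * t) * t ^ (-(1 / 2) : ℝ)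
      = (∫ u in (0 : ℝ)..c, fresnelIntegrand u) / √c := by
  have hscale : ∀ t ∈ Set.uIcc (0 : ℝ) 1,
      fresnelIntegrand (c * t) = (√c)⁻¹ * (cos (2 * π * c * t) * t ^ (-(1 / 2) : ℝ)) := by
    intro t ht
    rw [Set.uIcc_of_le zero_le_one] at ht
    rw [fresnelIntegrand, mul_rpow hc.le ht.1, sqrt_eq_rpow, ← rpow_neg hc.le, ← mul_assoc]
    ring_nf
  have h := integral_comp_mul_left fresnelIntegrand hc.ne' (a := 0) (b := 1)
  rw [integral_congr hscale, intervalIntegral.integral_const_mul, mul_zero, mul_one,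
    smul_eq_mul] at h
  have hinv : c⁻¹ = (√c)⁻¹ * (√c)⁻¹ := by rw [← mul_inv, mul_self_sqrt hc.le]
  calc ∫ t in (0 : ℝ)..1, cos (2 * π * c * t) * t ^ (-(1 / 2) : ℝ)
      = √c * ((√c)⁻¹ * ∫ t in (0 : ℝ)..1, cos (2 * π * c * t) * t ^ (-(1 / 2) : ℝ)) := by
        field_simp
    _ = (∫ u in (0 : ℝ)..c, fresnelIntegrand u) / √c := by rw [h, hinv]; field_simp

theorem one_div_ten_sqrt_le_integral_cos_mul_rpow {n : ℕ} (hn : 1 ≤ n) :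
    1 / (10 * √n) ≤ ∫ t in (0 : ℝ)..1, cos (2 * π * n * t) * t ^ (-(1 / 2) : ℝ) := by
  have hpos : (0 : ℝ) < n := by exact_mod_cast hn
  rw [integral_cos_mul_rpow_eq hpos, ← div_div]
  exact div_le_div_of_nonneg_right (one_div_ten_le_integral_fresnelIntegrand hn) (sqrt_nonneg _)

end FresnelIntegrand

def expRpow (n : ℤ) (r t : ℝ) : ℂ :=
  Complex.exp (2 * Real.pi * Complex.I * (n : ℂ) * (t : ℂ)) * ((t ^ r : ℝ) : ℂ)

theorem integral_mu01_eq_intervalIntegral {E : Type*} [NormedAddCommGroup E] [NormedSpace ℝ E]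
    (g : ℝ → E) : ∫ t, g t ∂mu01 = ∫ t in (0 : ℝ)..1, g t := by
  rw [mu01, integral_Icc_eq_integral_Ioc, intervalIntegral.integral_of_le zero_le_one]

theorem re_conj_expRpow_mul_expRpow {m n : ℤ} {r s t : ℝ} (ht : 0 ≤ t) (hrs : r + s ≠ 0) :
    ((starRingEnd ℂ) (expRpow m r t) * expRpow n s t).re
      = Real.cos (2 * π * (m - n) * t) * t ^ (r + s) := by
  have hexp : (starRingEnd ℂ) (Complex.exp (2 * π * Complex.I * m * t)) *
      Complex.exp (2 * π * Complex.I * n * t)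
        = Complex.exp (↑(2 * π * (n - m) * t) * Complex.I) := by
    rw [← Complex.exp_conj, ← Complex.exp_add]
    congr 1
    simp only [map_mul, Complex.conj_I, Complex.conj_ofReal, map_intCast, map_ofNat]
    push_cast
    ring
  rw [expRpow, expRpow, map_mul, Complex.conj_ofReal,
    mul_mul_mul_comm, hexp, ← Complex.ofReal_mul, ← Real.rpow_add' ht hrs,
    Complex.re_mul_ofReal, Complex.exp_ofReal_mul_I_re, ← Real.cos_neg]
  ring_nf

theorem re_inner_eq_integral_cos_mul_rpow {X Y : Lp ℂ 2 mu01} {m n : ℤ} {r s : ℝ}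
    (hX : X =ᵐ[mu01] expRpow m r) (hY : Y =ᵐ[mu01] expRpow n s) (hrs : r + s ≠ 0) :
    (inner ℂ X Y).re = ∫ t in (0 : ℝ)..1, Real.cos (2 * π * (m - n) * t) * t ^ (r + s) := by
  rw [L2.inner_def, ← RCLike.re_eq_complex_re, ← integral_re (L2.integrable_inner X Y),
    ← integral_mu01_eq_intervalIntegral]
  refine integral_congr_ae ?_
  filter_upwards [hX, hY, ae_restrict_mem measurableSet_Icc] with t hXt hYt ht
  rw [RCLike.inner_apply', hXt, hYt]
  exact re_conj_expRpow_mul_expRpow ht.1 hrs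

theorem norm_sq_eq_of_ae_eq_expRpow {Y : Lp ℂ 2 mu01} {n : ℤ} (hY : Y =ᵐ[mu01] expRpow n (1 / 4)) :
    ‖Y‖ ^ 2 = 2 / 3 := by
  rw [← inner_self_eq_norm_sq (𝕜 := ℂ), RCLike.re_eq_complex_re,
    re_inner_eq_integral_cos_mul_rpow hY hY (by norm_num)]
  simp only [sub_self, mul_zero, zero_mul, Real.cos_zero, one_mul]
  rw [integral_rpow (Or.inl (by norm_num))]
  norm_num

theorem not_summable_sq_norm_inner_smul {x y : ℤ → Lp ℂ 2 mu01} {f : Lp ℂ 2 mu01}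
    (hx : ∀ n, x n =ᵐ[mu01] expRpow n (-(1 / 4)))
    (hy : ∀ n, y n =ᵐ[mu01] expRpow n (1 / 4))
    (hf : (f : ℝ → ℂ) =ᵐ[mu01] fun t => ((t ^ (-(1 / 4 : ℝ)) : ℝ) : ℂ)) :
    ¬ Summable fun n : ℤ => ‖inner ℂ (x n) f • y n‖ ^ 2 := by
  have hf' : f =ᵐ[mu01] expRpow 0 (-(1 / 4)) := hf.trans (.of_forall fun t => by simp [expRpow])
  -- For `n = 0` the bound holds because `1 / 0 = 0`.
  have hlower : ∀ n : ℕ, 1 / 150 * (1 / (n : ℝ)) ≤ ‖inner ℂ (x n) f • y n‖ ^ 2 := by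
    intro n
    rcases Nat.eq_zero_or_pos n with rfl | hn
    · simp
    have hre : 1 / (10 * √n) ≤ (inner ℂ (x n) f).re := by
      rw [re_inner_eq_integral_cos_mul_rpow (hx n) hf' (by norm_num)]
      convert one_div_ten_sqrt_le_integral_cos_mul_rpow hn using 4 <;> norm_num
    calc 1 / 150 * (1 / (n : ℝ)) = (1 / (10 * √n)) ^ 2 * (2 / 3) := by
          rw [div_pow, mul_pow, Real.sq_sqrt n.cast_nonneg]; ring
      _ ≤ ‖inner ℂ (x n) f‖ ^ 2 * (2 / 3) := by
          gcongr; exact hre.trans (Complex.re_le_norm _)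
      _ = ‖inner ℂ (x n) f • y n‖ ^ 2 := by
          rw [norm_smul, mul_pow, norm_sq_eq_of_ae_eq_expRpow (hy n)]
  intro hsum
  refine Real.not_summable_one_div_natCast
    ((summable_mul_left_iff (a := 1 / 150) (by norm_num)).1 ?_)
  exact (hsum.comp_injective Nat.cast_injective).of_nonneg_of_le (fun n => by positivity) hlower

/-- **A non-framing with pointwise reconstruction** (Han–Larson–Liu–Liu, Example).
In `H = L²([0,1], ℂ)` let `xₙ(t) = e^{2πint} t^{-1/4}` and `yₙ(t) = e^{2πint} t^{1/4}`
(`n ∈ ℤ`).  Then `(xₙ, yₙ)` is not a framing for `H`: for `f(t) = t^{-1/4} ∈ L²[0,1]`,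
the family `(⟨f, xₙ⟩ · yₙ)_{n ∈ ℤ}` is not summable in `L²[0,1]` (the series
`∑ₙ ⟨f, xₙ⟩ yₙ` does not converge unconditionally); in particular the reconstruction
property `v = ∑ₙ ⟨v, yₙ⟩ xₙ` cannot hold unconditionally for all `v ∈ H`. -/
theorem not_framing_of_power_weighted_exponentials
    (x y : ℤ → Lp ℂ 2 mu01) (f : Lp ℂ 2 mu01)
    (hx : ∀ n : ℤ, (x n : ℝ → ℂ) =ᵐ[mu01]
      fun t => Complex.exp (2 * Real.pi * Complex.I * (n : ℂ) * (t : ℂ)) *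
        ((t ^ (-(1 / 4 : ℝ)) : ℝ) : ℂ))
    (hy : ∀ n : ℤ, (y n : ℝ → ℂ) =ᵐ[mu01]
      fun t => Complex.exp (2 * Real.pi * Complex.I * (n : ℂ) * (t : ℂ)) *
        ((t ^ ((1 / 4 : ℝ)) : ℝ) : ℂ))
    (hf : (f : ℝ → ℂ) =ᵐ[mu01] fun t => ((t ^ (-(1 / 4 : ℝ)) : ℝ) : ℂ)) :
    ¬ Summable (fun n : ℤ => (inner ℂ (x n) f : ℂ) • y n) ∧
    ¬ (∀ v : Lp ℂ 2 mu01, HasSum (fun n : ℤ => (inner ℂ (y n) v : ℂ) • x n) v) := by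
  have hunbounded : ¬ ∃ B, ∀ F : Finset ℤ, ‖∑ n ∈ F, inner ℂ (x n) f • y n‖ ≤ B :=
    fun ⟨_, hB⟩ => not_summable_sq_norm_inner_smul hx hy hf
      (summable_sq_norm_of_norm_finset_sum_le ℂ hB)
  exact ⟨fun h => hunbounded h.exists_norm_finset_sum_le,
    fun h => hunbounded (exists_norm_finset_sum_inner_smul_le (fun v => (h v).summable) f)⟩

end
end
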